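/- Covering lemma: let p: C → M be a covering, α, α̃ (n−1)-forms on C with dα = dα̃ = p*Ω, and Λ a generating form on C × C generating a map g: C → C. If Γ = π₂*α̃ − π₁*α − dΛ is invariant under a diagonal-type subgroup Δ = {(t, ψ(t)) : t ∈ T} of deck transformations (ψ an automorphism of the deck group T), then g satisfies g ∘ t = ψ(t) ∘ g for all t ∈ T, and hence g is the lift of a well-defined volume-preserving map f: M → M with p ∘ g = f ∘ p. -/
import Mathlib


/-- **Covering lemma.** Abstract rendering.  `p : C → M` is a (normal)
covering: `p` is surjective, the deck group `T ≤ Perm C` satisfies `p ∘ t = p` and acts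
transitively on fibers, and `ψ : T ≃* T` is an automorphism of the deck group.
`VM`,`VC` are the `n`-forms (volume forms) on `M` and `C` with pullbacks `pullM`,
`pullC`, `pullCM` (functorial), and `pullCM p` is injective (`p` is a local
diffeomorphism).  `AC` are the `(n-1)`-forms on `C` and `AN`,`BN` the `(n-1)`- and
`(n-2)`-forms on `C × C`; `vanish` gives the vanishing set of a form on `C × C`,
compatible with pullback along bijections.  Suppose `Λ` generates `g : C → C`, i.e. the
zero set of `Γ = π₂*α̃ - π₁*α - dΛ` is the graph of `g`, that `g` preserves `p*Ω`
(being exact volume-preserving), and that `Γ` is invariant under the diagonal-type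
subgroup `Δ = {(t, ψ t) : t ∈ T}`.  Then `g ∘ t = ψ(t) ∘ g` for every deck
transformation `t`, and `g` is the lift of a well-defined volume-preserving map
`f : M → M` with `p ∘ g = f ∘ p`. -/
theorem covering_lemma_lift_of_generated_map
    {C M VM VC AC AN BN : Type*}
    [AddCommGroup VM] [AddCommGroup VC] [AddCommGroup AC]
    [AddCommGroup AN] [AddCommGroup BN]
    (p : C → M) (hp : Function.Surjective p)
    (T : Subgroup (Equiv.Perm C))
    (hT : ∀ t ∈ T, ∀ c : C, p (t c) = p c)
    (htrans : ∀ c c' : C, p c = p c' → ∃ t ∈ T, t c = c')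
    (ψ : T ≃* T)
    (pullM : (M → M) → VM →+ VM)
    (pullC : (C → C) → VC →+ VC)
    (pullCM : (C → M) → VM →+ VC)
    (hcomp1 : ∀ (h : C → C) (q : C → M) (ω : VM),
        pullCM (q ∘ h) ω = pullC h (pullCM q ω))
    (hcomp2 : ∀ (q : C → M) (k : M → M) (ω : VM),
        pullCM (k ∘ q) ω = pullCM q (pullM k ω))
    (hpinj : Function.Injective (pullCM p))
    (Ω : VM)
    (dN : BN →+ AN)
    (pullNA : (C × C → C) → AC →+ AN)
    (pullNN : (C × C → C × C) → AN →+ AN)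
    (vanish : AN → Set (C × C))
    (vanish_pull : ∀ (u : C × C → C × C) (ω : AN), Function.Bijective u →
        vanish (pullNN u ω) = u ⁻¹' vanish ω)
    (α αt : AC) (Λ : BN) (g : C → C)
    (hgen : vanish (pullNA Prod.snd αt - pullNA Prod.fst α - dN Λ)
        = {x : C × C | x.2 = g x.1})
    (hΓinv : ∀ t : T, pullNN (fun x => ((t : Equiv.Perm C) x.1, ((ψ t : T) : Equiv.Perm C) x.2))
        (pullNA Prod.snd αt - pullNA Prod.fst α - dN Λ)
        = pullNA Prod.snd αt - pullNA Prod.fst α - dN Λ)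
    (hgvol : pullC g (pullCM p Ω) = pullCM p Ω) :
    (∀ t : T, g ∘ (t : Equiv.Perm C) = ((ψ t : T) : Equiv.Perm C) ∘ g) ∧
      ∃ f : M → M, p ∘ g = f ∘ p ∧ pullM f Ω = Ω := by

  -- equivariance
  have hequiv : ∀ t : T, ∀ c : C, g ((t : Equiv.Perm C) c) = ((ψ t : T) : Equiv.Perm C) (g c) := by
    intro t c
    have hbij : Function.Bijective
        (fun x : C × C => ((t : Equiv.Perm C) x.1, ((ψ t : T) : Equiv.Perm C) x.2)) :=
      (Equiv.prodCongr (t : Equiv.Perm C) ((ψ t : T) : Equiv.Perm C)).bijective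
    have h1 := vanish_pull _ (pullNA Prod.snd αt - pullNA Prod.fst α - dN Λ) hbij
    rw [hΓinv t, hgen] at h1
    have h2 : (c, g c) ∈ {x : C × C | x.2 = g x.1} := rfl
    rw [h1] at h2
    exact h2.symm
  refine ⟨fun t => funext fun c => hequiv t c, ?_⟩
  -- f well-defined
  have hwd : ∀ c c' : C, p c = p c' → p (g c) = p (g c') := by
    intro c c' h
    obtain ⟨t, htT, htc⟩ := htrans c c' h
    have := hequiv ⟨t, htT⟩ c
    rw [← htc, this]
    exact (hT _ (ψ ⟨t, htT⟩).2 (g c)).symm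
  set s := Function.surjInv hp with hs
  refine ⟨p ∘ g ∘ s, ?_, ?_⟩
  · funext c
    exact hwd c (s (p c)) (Function.surjInv_eq hp (p c)).symm
  · apply hpinj
    have heq : (p ∘ g ∘ s) ∘ p = p ∘ g :=
      funext fun c => hwd (s (p c)) c (Function.surjInv_eq hp (p c))
    have h1 : pullCM ((p ∘ g ∘ s) ∘ p) Ω = pullCM (p ∘ g) Ω := by rw [heq]
    calc pullCM p (pullM (p ∘ g ∘ s) Ω) = pullCM ((p ∘ g ∘ s) ∘ p) Ω := (hcomp2 p _ Ω).symm
      _ = pullCM (p ∘ g) Ω := h1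
      _ = pullC g (pullCM p Ω) := hcomp1 g p Ω
      _ = pullCM p Ω := hgvol
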